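/- arXiv:1909.13376 — 3 statements merged into one kernel-verified Lean document; each statement's English description precedes it below -/
import Mathlib

section
/- Termination for nodcap: if P ⊢ G in nodcap, then there is no infinite ⟹-reduction sequence starting from P. -/
/-! # nodcap: HCP extended with non-deterministic clients and servers -/

/-- nodcap session types: HCP types extended with client pools !ₙA and server interactions ?ₙA. -/
inductive Ty : Type
  | tens : Ty → Ty → Ty
  | parr : Ty → Ty → Ty
  | plus : Ty → Ty → Ty
  | wth  : Ty → Ty → Ty
  | one  : Ty
  | bot  : Ty
  | zero : Ty
  | top  : Ty
  | bang  : ℕ → Ty → Ty     -- !ₙA : pool of n clients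
  | quest : ℕ → Ty → Ty     -- ?ₙA : n server interactions

/-- Duality on HCP session types. -/
def Ty.dual : Ty → Ty
  | .tens A B => .parr A.dual B.dual
  | .parr A B => .tens A.dual B.dual
  | .plus A B => .wth A.dual B.dual
  | .wth A B  => .plus A.dual B.dual
  | .one => .bot
  | .bot => .one
  | .zero => .top
  | .top => .zero
  | .bang n A => .quest n A.dual
  | .quest n A => .bang n A.dual

/-- nodcap process terms: HCP terms extended with client creation and server interaction.  Endpoint names are natural numbers. -/
inductive Proc : Type
  | link : ℕ → ℕ → Proc                -- x ↔ y
  | halt : Proc                        -- terminated process 0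
  | nu : ℕ → ℕ → Proc → Proc           -- (νxx')P, "cut"
  | par : Proc → Proc → Proc           -- P ∣ Q, "mix"
  | out : ℕ → ℕ → Proc → Proc          -- x[y].P   (bound output)
  | inp : ℕ → ℕ → Proc → Proc          -- x(y).P
  | close : ℕ → Proc → Proc            -- x[].P
  | wait : ℕ → Proc → Proc             -- x().P
  | inl : ℕ → Proc → Proc              -- x◁inl.P
  | inr : ℕ → Proc → Proc              -- x◁inr.P
  | branch : ℕ → Proc → Proc → Proc    -- x▷{P;Q}
  | absurd : ℕ → Proc                  -- x▷{}
  | cout : ℕ → ℕ → Proc → Proc         -- ⋆x[y].P  client creation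
  | cinp : ℕ → ℕ → Proc → Proc         -- ⋆x(y).P  server interaction

namespace Proc

/-- Rename the name `y` to `w` if `y = x`. -/
def subn (w x y : ℕ) : ℕ := if y = x then w else y

/-- Renaming `P[w/x]` of the free name `x` to `w` (stopping under binders for `x`). -/
def subst : Proc → ℕ → ℕ → Proc
  | link a b, w, x => link (subn w x a) (subn w x b)
  | halt, _, _ => halt
  | nu a b P, w, x => if a = x ∨ b = x then nu a b P else nu a b (P.subst w x)
  | par P Q, w, x => par (P.subst w x) (Q.subst w x)
  | out a b P, w, x =>
      if b = x then out (subn w x a) b P else out (subn w x a) b (P.subst w x)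
  | inp a b P, w, x =>
      if b = x then inp (subn w x a) b P else inp (subn w x a) b (P.subst w x)
  | close a P, w, x => close (subn w x a) (P.subst w x)
  | wait a P, w, x => wait (subn w x a) (P.subst w x)
  | inl a P, w, x => inl (subn w x a) (P.subst w x)
  | inr a P, w, x => inr (subn w x a) (P.subst w x)
  | branch a P Q, w, x => branch (subn w x a) (P.subst w x) (Q.subst w x)
  | absurd a, w, x => absurd (subn w x a)
  | cout a b P, w, x =>
      if b = x then cout (subn w x a) b P else cout (subn w x a) b (P.subst w x)
  | cinp a b P, w, x =>
      if b = x then cinp (subn w x a) b P else cinp (subn w x a) b (P.subst w x)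

/-- Free names of a process. -/
def fn : Proc → Finset ℕ
  | link a b => {a, b}
  | halt => ∅
  | nu a b P => P.fn \ {a, b}
  | par P Q => P.fn ∪ Q.fn
  | out a b P => insert a (P.fn \ {b})
  | inp a b P => insert a (P.fn \ {b})
  | close a P => insert a P.fn
  | wait a P => insert a P.fn
  | inl a P => insert a P.fn
  | inr a P => insert a P.fn
  | branch a P Q => insert a (P.fn ∪ Q.fn)
  | absurd a => {a}
  | cout a b P => insert a (P.fn \ {b})
  | cinp a b P => insert a (P.fn \ {b})

/-- Structural congruence of HCP processes: the congruence closure of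
link symmetry, commutativity/associativity of `∣` with unit `0`,
garbage collection and commutation of name restriction, and scope extrusion. -/
inductive Cong : Proc → Proc → Prop
  | refl (P) : Cong P P
  | symm : Cong P Q → Cong Q P
  | trans : Cong P Q → Cong Q R → Cong P R
  -- congruence rules
  | nu_congr : Cong P Q → Cong (nu a b P) (nu a b Q)
  | par_congr : Cong P P' → Cong Q Q' → Cong (par P Q) (par P' Q')
  | out_congr : Cong P Q → Cong (out a b P) (out a b Q)
  | inp_congr : Cong P Q → Cong (inp a b P) (inp a b Q)
  | close_congr : Cong P Q → Cong (close a P) (close a Q)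
  | wait_congr : Cong P Q → Cong (wait a P) (wait a Q)
  | inl_congr : Cong P Q → Cong (inl a P) (inl a Q)
  | inr_congr : Cong P Q → Cong (inr a P) (inr a Q)
  | branch_congr : Cong P P' → Cong Q Q' → Cong (branch a P Q) (branch a P' Q')
  | cout_congr : Cong P Q → Cong (cout a b P) (cout a b Q)
  | cinp_congr : Cong P Q → Cong (cinp a b P) (cinp a b Q)
  -- axioms
  | link_comm (a b) : Cong (link a b) (link b a)
  | par_comm (P Q) : Cong (par P Q) (par Q P)
  | par_assoc (P Q R) : Cong (par P (par Q R)) (par (par P Q) R)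
  | par_halt (P) : Cong (par P halt) P
  | nu_halt (a b) : Cong (nu a b halt) halt
  | nu_comm (a b c d P) : Cong (nu a b (nu c d P)) (nu c d (nu a b P))
  | scope_ext (a b P Q) : a ∉ P.fn → b ∉ P.fn →
      Cong (nu a b (par P Q)) (par P (nu a b Q))

end Proc

/-- Typing environments: multisets of (endpoint, type) pairs. -/
abbrev Env : Type := Multiset (ℕ × Ty)

/-- Hyper-environments: multisets of environments. -/
abbrev Hyper : Type := Multiset Env

open Proc in
/-- The nodcap typing judgement `P ⊢ G`: the HCP rules (Ax, Cut, H-Mix, H-Mix₀,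
and the logical rules for ⊗, ⅋, 1, ⊥, ⊕, &, ⊤, acting on a single
environment), extended with (!₁), (?₁), Cont_! and Cont_?. -/
inductive Typed : Proc → Hyper → Prop
  | ax : Typed (link x y) {({(x, Ty.dual A), (y, A)} : Env)}
  | cut : Typed P (((x, A) ::ₘ Γ) ::ₘ ((x', Ty.dual A) ::ₘ Δ) ::ₘ G) →
      Typed (nu x x' P) ((Γ + Δ) ::ₘ G)
  | mix : Typed P G → Typed Q H → Typed (par P Q) (G + H)
  | mix₀ : Typed halt (0 : Hyper)
  | tens : Typed P (((y, A) ::ₘ Γ) ::ₘ {((x, B) ::ₘ Δ)}) →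
      Typed (out x y P) {((x, Ty.tens A B) ::ₘ (Γ + Δ))}
  | parr : Typed P {((y, A) ::ₘ (x, B) ::ₘ Γ)} →
      Typed (inp x y P) {((x, Ty.parr A B) ::ₘ Γ)}
  | one : Typed P (0 : Hyper) → Typed (close x P) {({(x, Ty.one)} : Env)}
  | bot : Typed P {Γ} → Typed (wait x P) {((x, Ty.bot) ::ₘ Γ)}
  | plus₁ : Typed P {((x, A) ::ₘ Γ)} → Typed (inl x P) {((x, Ty.plus A B) ::ₘ Γ)}
  | plus₂ : Typed P {((x, B) ::ₘ Γ)} → Typed (inr x P) {((x, Ty.plus A B) ::ₘ Γ)}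
  | wth : Typed P {((x, A) ::ₘ Γ)} → Typed Q {((x, B) ::ₘ Γ)} →
      Typed (branch x P Q) {((x, Ty.wth A B) ::ₘ Γ)}
  | top : Typed (absurd x) {((x, Ty.top) ::ₘ Γ)}
  | client : Typed P {((y, A) ::ₘ Γ)} →
      Typed (cout x y P) {((x, Ty.bang 1 A) ::ₘ Γ)}
  | server : Typed P {((y, A) ::ₘ Γ)} →
      Typed (cinp x y P) {((x, Ty.quest 1 A) ::ₘ Γ)}
  | cont_client :
      Typed P (((x, Ty.bang m A) ::ₘ Γ) ::ₘ ((x', Ty.bang n A) ::ₘ Δ) ::ₘ G) →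
      Typed (P.subst x x') (((x, Ty.bang (m + n) A) ::ₘ (Γ + Δ)) ::ₘ G)
  | cont_server :
      Typed P (((y, Ty.quest m A) ::ₘ (y', Ty.quest n A) ::ₘ Γ) ::ₘ G) →
      Typed (P.subst y y') (((y, Ty.quest (m + n) A) ::ₘ Γ) ::ₘ G)

open Proc in
/-- Reduction of nodcap processes: the HCP rules (link rule, principal cut
(β) rules, closed under name restriction, parallel composition on the left,
and structural congruence on both sides) extended with the rule (β⋆). -/
inductive Red : Proc → Proc → Prop
  | link_cut : Red (nu x x' (par (link w x) P)) (P.subst w x')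
  | beta_tens_parr :
      Red (nu x x' (par (out x y P) (inp x' y' Q))) (nu x x' (nu y y' (par P Q)))
  | beta_one_bot : Red (nu x x' (par (close x P) (wait x' Q))) (par P Q)
  | beta_plus_wth₁ :
      Red (nu x x' (par (inl x P) (branch x' Q R))) (nu x x' (par P Q))
  | beta_plus_wth₂ :
      Red (nu x x' (par (inr x P) (branch x' Q R))) (nu x x' (par P R))
  | beta_star :
      Red (nu x x' (par (par (cout x y P) (cinp x' y' Q)) R))
          (nu x x' (par (nu y y' (par P Q)) R))
  | res : Red P P' → Red (nu x x' P) (nu x x' P')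
  | mix : Red P P' → Red (par P Q) (par P' Q)
  | congr : Proc.Cong P Q → Red Q Q' → Proc.Cong Q' P' → Red P P'

namespace Proc

/-- `P` acts on `x` when `x` is free in the outermost term constructor of `P`. -/
def ActsOn : Proc → ℕ → Prop
  | link a b, x => x = a ∨ x = b
  | halt, _ => False
  | nu _ _ _, _ => False
  | par _ _, _ => False
  | out a _ _, x => x = a
  | inp a _ _, x => x = a
  | close a _, x => x = a
  | wait a _, x => x = a
  | inl a _, x => x = a
  | inr a _, x => x = a
  | branch a _ _, x => x = a
  | absurd a, x => x = a
  | cout a _ _, x => x = a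
  | cinp a _ _, x => x = a

/-- `P` is a cut (name restriction) or a mix (parallel composition). -/
def IsCutOrMix : Proc → Prop
  | nu _ _ _ => True
  | par _ _ => True
  | _ => False

/-- `P` is a link. -/
def IsLink : Proc → Prop
  | link _ _ => True
  | _ => False

/-- `(νx₁x₁')⋯(νxₙxₙ')Q` for the list `xs = [(x₁,x₁'),…,(xₙ,xₙ')]`. -/
def nuAll (xs : List (ℕ × ℕ)) (Q : Proc) : Proc :=
  xs.foldr (fun p acc => nu p.1 p.2 acc) Q

/-- `P₁ ∣ ⋯ ∣ Pₖ`. -/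
def parAll : List Proc → Proc
  | [] => halt
  | [P] => P
  | P :: Ps => par P (parAll Ps)

/-- The side conditions of canonical form for a decomposition
`(νx₁x₁')⋯(νxₙxₙ')(P₁ ∣ ⋯ ∣ P_{n+m+1})`: no `Pᵢ` is a cut or a mix, no `Pᵢ`
is a link acting on a bound channel, and no two `Pᵢ`, `Pⱼ` act on dual
endpoints of the same channel. -/
def CanonDecomp (xs : List (ℕ × ℕ)) (Ps : List Proc) : Prop :=
  xs.length < Ps.length ∧
  (∀ Pi ∈ Ps, ¬ Pi.IsCutOrMix) ∧
  (∀ Pi ∈ Ps, Pi.IsLink → ∀ p ∈ xs, ¬ Pi.ActsOn p.1 ∧ ¬ Pi.ActsOn p.2) ∧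
  (∀ i j : Fin Ps.length, i ≠ j → ∀ p ∈ xs,
    ¬ ((Ps.get i).ActsOn p.1 ∧ (Ps.get j).ActsOn p.2))

/-- A process is in canonical form if it is structurally congruent to a
decomposition satisfying `CanonDecomp`. -/
def Canonical (P : Proc) : Prop :=
  ∃ xs Ps, Cong P (nuAll xs (parAll Ps)) ∧ CanonDecomp xs Ps

end Proc

namespace Proc

/-- Measure counting action prefixes. -/
def mu : Proc → ℕ
  | link _ _ => 1
  | halt => 0
  | nu _ _ P => mu P
  | par P Q => mu P + mu Q
  | out _ _ P => mu P + 1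
  | inp _ _ P => mu P + 1
  | close _ P => mu P + 1
  | wait _ P => mu P + 1
  | inl _ P => mu P + 1
  | inr _ P => mu P + 1
  | branch _ P Q => mu P + mu Q + 1
  | absurd _ => 1
  | cout _ _ P => mu P + 1
  | cinp _ _ P => mu P + 1

lemma mu_subst (P : Proc) (w x : ℕ) : (P.subst w x).mu = P.mu := by
  induction P generalizing w x with
  | nu a b P ih => simp only [subst]; split <;> simp [mu, ih]
  | out a b P ih => simp only [subst]; split <;> simp [mu, ih]
  | inp a b P ih => simp only [subst]; split <;> simp [mu, ih]
  | cout a b P ih => simp only [subst]; split <;> simp [mu, ih]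
  | cinp a b P ih => simp only [subst]; split <;> simp [mu, ih]
  | _ => simp_all [subst, mu]

lemma mu_cong {P Q : Proc} (h : Cong P Q) : P.mu = Q.mu := by
  induction h <;> simp_all [mu] <;> omega

lemma mu_red {P Q : Proc} (h : Red P Q) : Q.mu < P.mu := by
  induction h with
  | link_cut => simp [mu, mu_subst]
  | beta_tens_parr => simp [mu]; omega
  | beta_one_bot => simp [mu]; omega
  | beta_plus_wth₁ => simp [mu]; omega
  | beta_plus_wth₂ => simp [mu]; omega
  | beta_star => simp [mu]; omega
  | res _ ih => simpa [mu] using ih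
  | mix _ ih => simp [mu]; omega
  | congr h₁ _ h₂ ih => rw [mu_cong h₁, ← mu_cong h₂]; exact ih

end Proc

/-- Termination for nodcap: no infinite ⟹-reduction sequence starts from a
well-typed process. -/
theorem nodcap_termination (P : Proc) (G : Hyper) (hP : Typed P G) :
    ¬ ∃ f : ℕ → Proc, f 0 = P ∧ ∀ n, Red (f n) (f (n + 1)) := by
  rintro ⟨f, -, hf⟩
  have h : ∀ n, (f n).mu + n ≤ (f 0).mu := by
    intro n
    induction n with
    | zero => simp
    | succ n ih => have := Proc.mu_red (hf n); omega
  have := h ((f 0).mu + 1)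
  omega
end

section
/- The generalized cut rule with server leftovers is derivable in nodcap: from P ⊢ Γ, x:!ₙA and Q ⊢ Δ, x':?_{n+m}(A^⊥), there is a process R built from P, Q, a link and cut such that R ⊢ Γ, Δ, w:?ₘ(A^⊥). -/
lemma Ty.dual_dual (A : Ty) : A.dual.dual = A := by
  induction A <;> simp only [Ty.dual, *]

namespace Typed

open Proc

lemma ax_dual {x y : ℕ} {A : Ty} : Typed (link x y) {({(x, A), (y, A.dual)} : Env)} := by
  simpa only [Ty.dual_dual] using ax (x := x) (y := y) (A := A.dual)

lemma cut_par {P Q : Proc} {x x' : ℕ} {A : Ty} {Γ Δ : Env}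
    (hP : Typed P {((x, A) ::ₘ Γ)}) (hQ : Typed Q {((x', A.dual) ::ₘ Δ)}) :
    Typed (nu x x' (par P Q)) {Γ + Δ} :=
  cut (G := 0) (mix hP hQ)

lemma cont_client_par {P Q : Proc} {x y m n : ℕ} {A : Ty} {Γ Δ : Env}
    (hP : Typed P {((x, Ty.bang m A) ::ₘ Γ)}) (hQ : Typed Q {((y, Ty.bang n A) ::ₘ Δ)}) :
    Typed ((par P Q).subst x y) {((x, Ty.bang (m + n) A) ::ₘ (Γ + Δ))} :=
  cont_client (G := 0) (mix hP hQ)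

end Typed

open Proc in
/-- The generalized cut rule with server leftovers is derivable in nodcap:
from `P ⊢ Γ, x:!ₙA` and `Q ⊢ Δ, x':?_{n+m}(A^⊥)`, there is a process `R`
with `R ⊢ Γ, Δ, w:?ₘ(A^⊥)`. -/
theorem nodcap_cut_server_leftovers (Γ Δ : Env) (A : Ty) (P Q : Proc)
    (x x' w : ℕ) (n m : ℕ)
    (hP : Typed P {((x, Ty.bang n A) ::ₘ Γ)})
    (hQ : Typed Q {((x', Ty.quest (n + m) A.dual) ::ₘ Δ)}) :
    ∃ R : Proc, Typed R {((w, Ty.quest m A.dual) ::ₘ (Γ + Δ))} := by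
  -- The link `x ↔ w` forwards the `m` server interactions that `P` does not consume.
  have hlink : Typed (link x w) {((x, Ty.bang m A) ::ₘ {(w, Ty.quest m A.dual)})} :=
    Typed.ax_dual (A := Ty.bang m A)
  have hR := (hP.cont_client_par hlink).cut_par (x' := x') hQ
  rw [add_comm Γ, Multiset.singleton_add, Multiset.cons_add] at hR
  exact ⟨_, hR⟩
end

section
/- Non-deterministic local choice is admissible in nodcap: if P ⊢ Γ and Q ⊢ Γ, then there is a nodcap process R (built using a server offering both P and Q and a pool of two clients making opposite selections) such that R ⊢ Γ, and R reduces to (a process structurally congruent to) P and also reduces to (a process structurally congruent to) Q. -/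
namespace Proc

lemma subn_ne {w x a : ℕ} (h : a ≠ x) : subn w x a = a := by simp [subn, h]

lemma subst_id (P : Proc) (w x : ℕ) (h : x ∉ P.fn) : P.subst w x = P := by
  induction P with
  | link a b =>
      simp [fn] at h
      try push_neg at h
      simp [subst, subn_ne (Ne.symm h.1), subn_ne (Ne.symm h.2)]
  | halt => simp [subst]
  | nu a b P ih =>
      by_cases hab : a = x ∨ b = x
      · simp [subst, hab]
      · push_neg at hab
        simp [fn, hab.1.symm, hab.2.symm] at h
        simp [subst, hab.1, hab.2, ih h]
  | par P Q ihP ihQ =>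
      simp [fn] at h; try push_neg at h
      simp [subst, ihP h.1, ihQ h.2]
  | out a b P ih =>
      simp [fn] at h; try push_neg at h
      by_cases hb : b = x
      · simp [subst, hb, subn_ne (Ne.symm h.1)]
      · have : x ∉ P.fn := fun hx => hb (h.2 hx).symm
        simp [subst, hb, subn_ne (Ne.symm h.1), ih this]
  | inp a b P ih =>
      simp [fn] at h; try push_neg at h
      by_cases hb : b = x
      · simp [subst, hb, subn_ne (Ne.symm h.1)]
      · have : x ∉ P.fn := fun hx => hb (h.2 hx).symm
        simp [subst, hb, subn_ne (Ne.symm h.1), ih this]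
  | close a P ih =>
      simp [fn] at h; try push_neg at h
      simp [subst, subn_ne (Ne.symm h.1), ih h.2]
  | wait a P ih =>
      simp [fn] at h; try push_neg at h
      simp [subst, subn_ne (Ne.symm h.1), ih h.2]
  | inl a P ih =>
      simp [fn] at h; try push_neg at h
      simp [subst, subn_ne (Ne.symm h.1), ih h.2]
  | inr a P ih =>
      simp [fn] at h; try push_neg at h
      simp [subst, subn_ne (Ne.symm h.1), ih h.2]
  | branch a P Q ihP ihQ =>
      simp [fn] at h; try push_neg at h
      simp [subst, subn_ne (Ne.symm h.1), ihP h.2.1, ihQ h.2.2]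
  | absurd a =>
      simp [fn] at h
      simp [subst, subn_ne (Ne.symm h)]
  | cout a b P ih =>
      simp [fn] at h; try push_neg at h
      by_cases hb : b = x
      · simp [subst, hb, subn_ne (Ne.symm h.1)]
      · have : x ∉ P.fn := fun hx => hb (h.2 hx).symm
        simp [subst, hb, subn_ne (Ne.symm h.1), ih this]
  | cinp a b P ih =>
      simp [fn] at h; try push_neg at h
      by_cases hb : b = x
      · simp [subst, hb, subn_ne (Ne.symm h.1)]
      · have : x ∉ P.fn := fun hx => hb (h.2 hx).symm
        simp [subst, hb, subn_ne (Ne.symm h.1), ih this]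

/-- rotate: (a|b)|c ≅ (a|c)|b -/
lemma Cong.rot1 (a b c : Proc) : Cong (par (par a b) c) (par (par a c) b) :=
  ((Cong.par_assoc a b c).symm).trans
    ((Cong.par_congr (Cong.refl a) (Cong.par_comm b c)).trans (Cong.par_assoc a c b))

/-- rotate: a|(b|c) ≅ b|(a|c) -/
lemma Cong.rot2 (a b c : Proc) : Cong (par a (par b c)) (par b (par a c)) :=
  (Cong.par_assoc a b c).trans
    ((Cong.par_congr (Cong.par_comm a b) (Cong.refl c)).trans (Cong.par_assoc b a c).symm)

/-- rotate: a|(b|c) ≅ (a|c)|b -/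
lemma Cong.rot3 (a b c : Proc) : Cong (par a (par b c)) (par (par a c) b) :=
  (Cong.par_congr (Cong.refl a) (Cong.par_comm b c)).trans (Cong.par_assoc a c b)

/-- pull a parallel component inside a restriction it does not mention -/
lemma Cong.pull_nu (n m : ℕ) (M C : Proc) (h1 : n ∉ C.fn) (h2 : m ∉ C.fn) :
    Cong (par (nu n m M) C) (nu n m (par C M)) :=
  (Cong.par_comm _ _).trans (Cong.scope_ext n m C M h1 h2).symm

lemma Red.mix_right {K K' : Proc} (C : Proc) (h : Red K K') :
    Red (par C K) (par C K') :=
  Red.congr (Cong.par_comm _ _) (Red.mix h) (Cong.par_comm _ _)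

end Proc

namespace NDC
open Proc

/-- client payload selecting left -/
def cy (y : ℕ) : Proc := .inl y (.close y .halt)
/-- client payload selecting right -/
def cz (z : ℕ) : Proc := .inr z (.close z .halt)
def c1 (x y : ℕ) : Proc := .cout x y (cy y)
def c2 (x z : ℕ) : Proc := .cout x z (cz z)
/-- a server arm: wait for ⊥ on a, then discard the other selection on b, continuing as W -/
def arm (a b : ℕ) (W : Proc) : Proc := .wait a (.branch b (.wait b W) (.wait b W))
def srvT (y' z' : ℕ) (W V : Proc) : Proc := .branch y' (arm y' z' W) (arm y' z' V)
def srv (x' y' z' : ℕ) (W V : Proc) : Proc :=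
  .cinp x' y' (.cinp x' z' (srvT y' z' W V))
def Rproc (x x' y y' z z' : ℕ) (W V : Proc) : Proc :=
  .nu x x' (.par (.par (c1 x y) (c2 x z)) (srv x' y' z' W V))

lemma fn_cy (y : ℕ) : (cy y).fn = {y} := by simp [cy, Proc.fn]
lemma fn_cz (z : ℕ) : (cz z).fn = {z} := by simp [cz, Proc.fn]
lemma fn_c1 (x y : ℕ) : (c1 x y).fn = {x} := by simp [c1, cy, Proc.fn]
lemma fn_c2 (x z : ℕ) : (c2 x z).fn = {x} := by simp [c2, cz, Proc.fn]

end NDC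

namespace NDC
open Proc

lemma red_inl (W V : Proc) (x x' y y' z z' : ℕ)
    (hyx : y ≠ x) (hy'x : y' ≠ x) (hzy : z ≠ y) (hz'y : z' ≠ y)
    (hyz : y ≠ z) (hy'z : y' ≠ z)
    (hxW : x ∉ W.fn) (hx'W : x' ∉ W.fn) :
    Relation.ReflTransGen Red (Rproc x x' y y' z z' W V) W := by
  set T := srvT y' z' W V with hT
  set S1 : Proc := .cinp x' z' T with hS1
  -- step 1 : β⋆ pairing the left client with the first server interaction
  have s1 : Red (Rproc x x' y y' z z' W V)
      (.nu y y' (.nu x x' (.par (.par (c2 x z) S1) (cy y)))) := by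
    refine Red.congr (Cong.nu_congr (Cong.rot1 (c1 x y) (c2 x z) (.cinp x' y' S1)))
      (Red.beta_star (x := x) (x' := x') (y := y) (y' := y')
        (P := cy y) (Q := S1) (R := c2 x z)) ?_
    refine Cong.trans (Cong.nu_congr (Cong.pull_nu y y' _ (c2 x z) ?_ ?_)) ?_
    · rw [fn_c2]; simpa using hyx
    · rw [fn_c2]; simpa using hy'x
    refine Cong.trans (Cong.nu_comm _ _ _ _ _) ?_
    exact Cong.nu_congr (Cong.nu_congr (Cong.rot3 (c2 x z) (cy y) S1))
  -- step 2 : β⋆ pairing the right client with the second server interaction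
  have s2 : Red (Proc.nu y y' (.nu x x' (.par (.par (c2 x z) S1) (cy y))))
      (.nu x x' (.nu z z' (.par (cz z) (.nu y y' (.par (cy y) T))))) := by
    refine Red.congr (Cong.refl _)
      (Red.res (Red.beta_star (x := x) (x' := x') (y := z) (y' := z')
        (P := cz z) (Q := T) (R := cy y))) ?_
    refine Cong.trans (Cong.nu_congr (Cong.nu_congr (Cong.pull_nu z z' _ (cy y) ?_ ?_))) ?_
    · rw [fn_cy]; simpa using hzy
    · rw [fn_cy]; simpa using hz'y
    refine Cong.trans (Cong.nu_comm _ _ _ _ _) ?_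
    refine Cong.nu_congr ?_
    refine Cong.trans (Cong.nu_comm _ _ _ _ _) ?_
    refine Cong.nu_congr ?_
    refine Cong.trans (Cong.nu_congr (Cong.rot2 (cy y) (cz z) T)) ?_
    refine Cong.scope_ext y y' (cz z) _ ?_ ?_
    · rw [fn_cz]; simpa using hyz
    · rw [fn_cz]; simpa using hy'z
  -- step 3 : left client's inl meets the branch on y'
  have s3 : Red (Proc.nu x x' (.nu z z' (.par (cz z) (.nu y y' (.par (cy y) T)))))
      (.nu x x' (.nu z z' (.par (cz z) (.nu y y' (.par (.close y .halt) (arm y' z' W)))))) :=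
    Red.res (Red.res (Red.mix_right _
      (Red.beta_plus_wth₁ (x := y) (x' := y') (P := .close y .halt)
        (Q := arm y' z' W) (R := arm y' z' V))))
  have s4 : Red (Proc.nu x x' (.nu z z' (.par (cz z) (.nu y y' (.par (.close y .halt) (arm y' z' W))))))
      (.nu x x' (.nu z z' (.par (cz z) (.branch z' (.wait z' W) (.wait z' W))))) := by
    refine Red.congr (Cong.refl _)
      (Red.res (Red.res (Red.mix_right _ (Red.beta_one_bot (x := y) (x' := y')
        (P := Proc.halt) (Q := .branch z' (.wait z' W) (.wait z' W)))))) ?_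
    exact Cong.nu_congr (Cong.nu_congr (Cong.par_congr (Cong.refl _)
      ((Cong.par_comm _ _).trans (Cong.par_halt _))))
  -- step 5 : right client's inr meets the branch on z'
  have s5 : Red (Proc.nu x x' (.nu z z' (.par (cz z) (.branch z' (.wait z' W) (.wait z' W)))))
      (.nu x x' (.nu z z' (.par (.close z .halt) (.wait z' W)))) :=
    Red.res (Red.beta_plus_wth₂ (x := z) (x' := z') (P := .close z .halt)
      (Q := .wait z' W) (R := .wait z' W))
  have s6 : Red (Proc.nu x x' (.nu z z' (.par (.close z .halt) (.wait z' W)))) W := by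
    refine Red.congr (Cong.refl _)
      (Red.res (Red.beta_one_bot (x := z) (x' := z') (P := Proc.halt) (Q := W))) ?_
    exact (Cong.nu_congr (Cong.par_comm _ _)).trans
      ((Cong.scope_ext x x' W .halt hxW hx'W).trans
        ((Cong.par_congr (Cong.refl W) (Cong.nu_halt x x')).trans (Cong.par_halt W)))
  exact .head s1 (.head s2 (.head s3 (.head s4 (.head s5 (.single s6)))))

end NDC

namespace NDC
open Proc

lemma red_inr (W V : Proc) (x x' y y' z z' : ℕ)
    (hzx : z ≠ x) (hy'x : y' ≠ x) (hyz : y ≠ z) (hz'z : z' ≠ z)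
    (hzy : z ≠ y) (hy'y : y' ≠ y)
    (hxV : x ∉ V.fn) (hx'V : x' ∉ V.fn) :
    Relation.ReflTransGen Red (Rproc x x' y y' z z' W V) V := by
  set T := srvT y' z' W V with hT
  set S1 : Proc := .cinp x' z' T with hS1
  -- step 1 : β⋆ pairing the right client with the first server interaction
  have s1 : Red (Rproc x x' y y' z z' W V)
      (.nu z y' (.nu x x' (.par (.par (c1 x y) S1) (cz z)))) := by
    refine Red.congr (Cong.nu_congr
      ((Cong.par_congr (Cong.par_comm (c1 x y) (c2 x z)) (Cong.refl _)).trans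
        (Cong.rot1 (c2 x z) (c1 x y) (.cinp x' y' S1))))
      (Red.beta_star (x := x) (x' := x') (y := z) (y' := y')
        (P := cz z) (Q := S1) (R := c1 x y)) ?_
    refine Cong.trans (Cong.nu_congr (Cong.pull_nu z y' _ (c1 x y) ?_ ?_)) ?_
    · rw [fn_c1]; simpa using hzx
    · rw [fn_c1]; simpa using hy'x
    refine Cong.trans (Cong.nu_comm _ _ _ _ _) ?_
    exact Cong.nu_congr (Cong.nu_congr (Cong.rot3 (c1 x y) (cz z) S1))
  -- step 2 : β⋆ pairing the left client with the second server interaction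
  have s2 : Red (Proc.nu z y' (.nu x x' (.par (.par (c1 x y) S1) (cz z))))
      (.nu x x' (.nu y z' (.par (cy y) (.nu z y' (.par (cz z) T))))) := by
    refine Red.congr (Cong.refl _)
      (Red.res (Red.beta_star (x := x) (x' := x') (y := y) (y' := z')
        (P := cy y) (Q := T) (R := cz z))) ?_
    refine Cong.trans (Cong.nu_congr (Cong.nu_congr (Cong.pull_nu y z' _ (cz z) ?_ ?_))) ?_
    · rw [fn_cz]; simpa using hyz
    · rw [fn_cz]; simpa using hz'z
    refine Cong.trans (Cong.nu_comm _ _ _ _ _) ?_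
    refine Cong.nu_congr ?_
    refine Cong.trans (Cong.nu_comm _ _ _ _ _) ?_
    refine Cong.nu_congr ?_
    refine Cong.trans (Cong.nu_congr (Cong.rot2 (cz z) (cy y) T)) ?_
    refine Cong.scope_ext z y' (cy y) _ ?_ ?_
    · rw [fn_cy]; simpa using hzy
    · rw [fn_cy]; simpa using hy'y
  -- step 3 : right client's inr meets the branch on y'
  have s3 : Red (Proc.nu x x' (.nu y z' (.par (cy y) (.nu z y' (.par (cz z) T)))))
      (.nu x x' (.nu y z' (.par (cy y) (.nu z y' (.par (.close z .halt) (arm y' z' V)))))) :=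
    Red.res (Red.res (Red.mix_right _
      (Red.beta_plus_wth₂ (x := z) (x' := y') (P := .close z .halt)
        (Q := arm y' z' W) (R := arm y' z' V))))
  have s4 : Red (Proc.nu x x' (.nu y z' (.par (cy y) (.nu z y' (.par (.close z .halt) (arm y' z' V))))))
      (.nu x x' (.nu y z' (.par (cy y) (.branch z' (.wait z' V) (.wait z' V))))) := by
    refine Red.congr (Cong.refl _)
      (Red.res (Red.res (Red.mix_right _ (Red.beta_one_bot (x := z) (x' := y')
        (P := Proc.halt) (Q := .branch z' (.wait z' V) (.wait z' V)))))) ?_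
    exact Cong.nu_congr (Cong.nu_congr (Cong.par_congr (Cong.refl _)
      ((Cong.par_comm _ _).trans (Cong.par_halt _))))
  -- step 5 : left client's inl meets the branch on z'
  have s5 : Red (Proc.nu x x' (.nu y z' (.par (cy y) (.branch z' (.wait z' V) (.wait z' V)))))
      (.nu x x' (.nu y z' (.par (.close y .halt) (.wait z' V)))) :=
    Red.res (Red.beta_plus_wth₁ (x := y) (x' := z') (P := .close y .halt)
      (Q := .wait z' V) (R := .wait z' V))
  have s6 : Red (Proc.nu x x' (.nu y z' (.par (.close y .halt) (.wait z' V)))) V := by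
    refine Red.congr (Cong.refl _)
      (Red.res (Red.beta_one_bot (x := y) (x' := z') (P := Proc.halt) (Q := V))) ?_
    exact (Cong.nu_congr (Cong.par_comm _ _)).trans
      ((Cong.scope_ext x x' V .halt hxV hx'V).trans
        ((Cong.par_congr (Cong.refl V) (Cong.nu_halt x x')).trans (Cong.par_halt V)))
  exact .head s1 (.head s2 (.head s3 (.head s4 (.head s5 (.single s6)))))

end NDC

namespace NDC
open Proc

/-- The type of the clients' selection. -/
def A₀ : Ty := Ty.plus .one .one
/-- The dual type, offered by the server arms. -/
def D₀ : Ty := Ty.wth .bot .bot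

lemma typed_R (Γ : Env) (W V : Proc) (x x' y y' z z' u v : ℕ)
    (hW : Typed W {Γ}) (hV : Typed V {Γ})
    (hyu : y ≠ u) (hzu : z ≠ u)
    (hy'v : y' ≠ v) (hz'v : z' ≠ v) (hvW : v ∉ W.fn) (hvV : v ∉ V.fn) :
    Typed (Rproc x x' y y' z z' W V) {Γ} := by
  -- the pool of two clients
  have tc1 : Typed (c1 x y) {({(x, Ty.bang 1 A₀)} : Env)} :=
    Typed.client (Typed.plus₁ (Typed.one Typed.mix₀))
  have tc2u : Typed (.cout u z (cz z)) {({(u, Ty.bang 1 A₀)} : Env)} :=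
    Typed.client (Typed.plus₂ (Typed.one Typed.mix₀))
  have tpre := Typed.mix tc1 tc2u
  have tpool := Typed.cont_client (m := 1) (n := 1) (Γ := 0) (Δ := 0) (G := 0) tpre
  have esub : (Proc.par (c1 x y) (.cout u z (cz z))).subst x u
      = .par (c1 x y) (c2 x z) := by
    simp [c1, c2, cy, cz, Proc.subst, Proc.subn, hyu, hzu]
  rw [esub] at tpool
  -- the server
  have tB1 : Typed (Proc.branch z' (.wait z' W) (.wait z' W)) {((z', D₀) ::ₘ Γ)} :=
    Typed.wth (Typed.bot hW) (Typed.bot hW)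
  have tB2 : Typed (Proc.branch z' (.wait z' V) (.wait z' V)) {((z', D₀) ::ₘ Γ)} :=
    Typed.wth (Typed.bot hV) (Typed.bot hV)
  have tT : Typed (srvT y' z' W V) {((y', D₀) ::ₘ (z', D₀) ::ₘ Γ)} :=
    Typed.wth (Typed.bot tB1) (Typed.bot tB2)
  rw [Multiset.cons_swap] at tT
  have tS1 : Typed (Proc.cinp v z' (srvT y' z' W V))
      {((v, Ty.quest 1 D₀) ::ₘ (y', D₀) ::ₘ Γ)} := Typed.server tT
  rw [Multiset.cons_swap] at tS1
  have tS2 : Typed (Proc.cinp x' y' (.cinp v z' (srvT y' z' W V)))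
      {((x', Ty.quest 1 D₀) ::ₘ (v, Ty.quest 1 D₀) ::ₘ Γ)} := Typed.server tS1
  have tS3 := Typed.cont_server (m := 1) (n := 1) (G := 0) tS2
  have hvT : v ∉ (srvT y' z' W V).fn := by
    simp [srvT, arm, Proc.fn, Ne.symm hy'v, Ne.symm hz'v, hvW, hvV]
  have esrv : (Proc.cinp x' y' (.cinp v z' (srvT y' z' W V))).subst x' v
      = srv x' y' z' W V := by
    simp [srv, srvT, arm, Proc.subst, Proc.subn, hy'v, hz'v, Ne.symm hy'v, Ne.symm hz'v,
      subst_id W x' v hvW, subst_id V x' v hvV]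
  rw [esrv] at tS3
  -- cut the pool against the server
  have tpar := Typed.mix tpool tS3
  have tcut := Typed.cut (x := x) (x' := x') (A := Ty.bang (1 + 1) A₀)
    (Γ := ((0 : Env) + 0)) (Δ := Γ) (G := 0) tpar
  have : ((((0 : Env) + 0) + Γ) ::ₘ (0 : Hyper)) = {Γ} := by simp
  rw [this] at tcut
  exact tcut

end NDC
/-- Non-deterministic local choice is admissible in nodcap: if `P ⊢ Γ` and
`Q ⊢ Γ`, then there is a nodcap process `R` with `R ⊢ Γ` which reduces both to
a process structurally congruent to `P` and to one structurally congruent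
to `Q`. -/
theorem nodcap_local_choice (Γ : Env) (P Q : Proc)
    (hP : Typed P {Γ}) (hQ : Typed Q {Γ}) :
    ∃ R : Proc, Typed R {Γ} ∧
      (∃ P', Relation.ReflTransGen Red R P' ∧ Proc.Cong P' P) ∧
      (∃ Q', Relation.ReflTransGen Red R Q' ∧ Proc.Cong Q' Q) := by
  classical
  set N : ℕ := (P.fn ∪ Q.fn).sup id with hN
  have hfr : ∀ n ∈ P.fn ∪ Q.fn, n ≤ N := fun n hn => Finset.le_sup (f := id) hn
  have hfrP : ∀ i, N < i → i ∉ P.fn := fun i hi hmem =>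
    absurd (hfr i (Finset.mem_union_left _ hmem)) (by omega)
  have hfrQ : ∀ i, N < i → i ∉ Q.fn := fun i hi hmem =>
    absurd (hfr i (Finset.mem_union_right _ hmem)) (by omega)
  refine ⟨NDC.Rproc (N+1) (N+2) (N+3) (N+4) (N+5) (N+6) P Q,
    NDC.typed_R Γ P Q (N+1) (N+2) (N+3) (N+4) (N+5) (N+6) (N+7) (N+8) hP hQ
      (by omega) (by omega) (by omega) (by omega)
      (hfrP _ (by omega)) (hfrQ _ (by omega)),
    ⟨P, ?_, Proc.Cong.refl P⟩, ⟨Q, ?_, Proc.Cong.refl Q⟩⟩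
  · exact NDC.red_inl P Q (N+1) (N+2) (N+3) (N+4) (N+5) (N+6)
      (by omega) (by omega) (by omega) (by omega) (by omega) (by omega)
      (hfrP _ (by omega)) (hfrP _ (by omega))
  · exact NDC.red_inr P Q (N+1) (N+2) (N+3) (N+4) (N+5) (N+6)
      (by omega) (by omega) (by omega) (by omega) (by omega) (by omega)
      (hfrQ _ (by omega)) (hfrQ _ (by omega))
end
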